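/- A subset A of B is an implication sublattice of B if and only if there exists a ∈ B such that a ∈ A, every element of A lies in [a,1] = {x ∈ B : a ≤ x}, 1 ∈ A, and A is closed under ⊔, ⊓, and the relative complement x ↦ xᶜ ⊔ a of the Boolean algebra [a,1]; that is, A is a Boolean subalgebra of the Boolean algebra [a,1] for some a ∈ B. -/

import Mathlib

/-!
An implication sublattice `A` is closed under `⊓`, so being finite it has a least element `a`;
it contains `⊤ = xᶜ ⊔ x`, is closed under `⊔` because `x ⊔ y = (xᶜ ⊔ y)ᶜ ⊔ y`, and under the
relative complement `x ↦ xᶜ ⊔ a` as an instance of implication. Conversely, if `a` is least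
in `A`, then `xᶜ ⊔ y = (xᶜ ⊔ a) ⊔ y` for `y ∈ A`.
-/

open scoped Classical

noncomputable section

/-- An implication sublattice of a Boolean algebra `B`: a nonempty subset closed under
the implication `x → y := xᶜ ⊔ y` and under meet. -/
def IsImplSublattice {B : Type*} [BooleanAlgebra B] (A : Set B) : Prop :=
  A.Nonempty ∧ (∀ x ∈ A, ∀ y ∈ A, xᶜ ⊔ y ∈ A) ∧ (∀ x ∈ A, ∀ y ∈ A, x ⊓ y ∈ A)

/-- A Boolean subalgebra of `B`: a subset containing `⊥` and `⊤`, closed under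
join, meet and complement. -/
def IsBoolSubalgebra {B : Type*} [BooleanAlgebra B] (C : Set B) : Prop :=
  (⊥ : B) ∈ C ∧ (⊤ : B) ∈ C ∧ (∀ x ∈ C, ∀ y ∈ C, x ⊔ y ∈ C) ∧
    (∀ x ∈ C, ∀ y ∈ C, x ⊓ y ∈ C) ∧ (∀ x ∈ C, xᶜ ∈ C)

lemma InfClosed.exists_isLeast {α : Type*} [SemilatticeInf α] {s : Set α} (hs : InfClosed s)
    (hfin : s.Finite) (hne : s.Nonempty) : ∃ a, IsLeast s a := by
  have hne' : hfin.toFinset.Nonempty := hfin.toFinset_nonempty.2 hne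
  exact ⟨hfin.toFinset.inf' hne' id,
    hs.finsetInf'_mem hne' fun _ hx ↦ hfin.mem_toFinset.1 hx,
    fun _ hx ↦ Finset.inf'_le id (hfin.mem_toFinset.2 hx)⟩

section BooleanAlgebra

variable {B : Type*} [BooleanAlgebra B] {A : Set B}

lemma compl_compl_sup_sup_self (x y : B) : (xᶜ ⊔ y)ᶜ ⊔ y = x ⊔ y := by
  rw [compl_sup, compl_compl, sup_inf_right, compl_sup_eq_top, inf_top_eq]

namespace IsImplSublattice

lemma top_mem (hA : IsImplSublattice A) : ⊤ ∈ A := by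
  obtain ⟨⟨x, hx⟩, himp, -⟩ := hA
  simpa only [compl_sup_eq_top] using himp x hx x hx

lemma sup_mem (hA : IsImplSublattice A) {x y : B} (hx : x ∈ A) (hy : y ∈ A) : x ⊔ y ∈ A := by
  have himp := hA.2.1
  simpa only [compl_compl_sup_sup_self] using himp _ (himp x hx y hy) y hy

lemma exists_isLeast (hA : IsImplSublattice A) (hfin : A.Finite) : ∃ a, IsLeast A a :=
  InfClosed.exists_isLeast (fun x hx y hy ↦ hA.2.2 x hx y hy) hfin hA.1

lemma of_isLeast {a : B} (ha : IsLeast A a) (hsup : ∀ x ∈ A, ∀ y ∈ A, x ⊔ y ∈ A)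
    (hinf : ∀ x ∈ A, ∀ y ∈ A, x ⊓ y ∈ A) (hcompl : ∀ x ∈ A, xᶜ ⊔ a ∈ A) :
    IsImplSublattice A := by
  refine ⟨⟨a, ha.1⟩, fun x hx y hy ↦ ?_, hinf⟩
  have hay : xᶜ ⊔ a ⊔ y = xᶜ ⊔ y := by rw [sup_assoc, sup_eq_right.2 (ha.2 hy)]
  simpa only [hay] using hsup _ (hcompl x hx) y hy

end IsImplSublattice

end BooleanAlgebra

theorem isImplSublattice_iff_boolSubalgebra_Ici_general {B : Type*} [Fintype B] [BooleanAlgebra B]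
    (A : Set B) :
    IsImplSublattice A ↔
      ∃ a : B, a ∈ A ∧ A ⊆ Set.Ici a ∧ (⊤ : B) ∈ A ∧
        (∀ x ∈ A, ∀ y ∈ A, x ⊔ y ∈ A) ∧ (∀ x ∈ A, ∀ y ∈ A, x ⊓ y ∈ A) ∧
        (∀ x ∈ A, xᶜ ⊔ a ∈ A) := by
  constructor
  · intro hA
    obtain ⟨a, haA, hleast⟩ := hA.exists_isLeast A.toFinite
    exact ⟨a, haA, hleast, hA.top_mem, fun _ hx _ hy ↦ hA.sup_mem hx hy, hA.2.2,
      fun x hx ↦ hA.2.1 x hx a haA⟩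
  · rintro ⟨a, haA, hleast, -, hsup, hinf, hcompl⟩
    exact IsImplSublattice.of_isLeast ⟨haA, hleast⟩ hsup hinf hcompl

/-- characterization of implication sublattices.  A subset `A` of `B`
is an implication sublattice iff it is a Boolean subalgebra of the interval Boolean
algebra `[a,⊤] = {x : a ≤ x}` for some `a ∈ B`: there is `a ∈ A` with `A ⊆ [a,⊤]`,
`⊤ ∈ A`, and `A` closed under `⊔`, `⊓` and the relative complement `x ↦ xᶜ ⊔ a`. -/
theorem isImplSublattice_iff_boolSubalgebra_Ici {B : Type*} [Fintype B] [BooleanAlgebra B]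
    [Nontrivial B] (A : Set B) :
    IsImplSublattice A ↔
      ∃ a : B, a ∈ A ∧ A ⊆ Set.Ici a ∧ (⊤ : B) ∈ A ∧
        (∀ x ∈ A, ∀ y ∈ A, x ⊔ y ∈ A) ∧ (∀ x ∈ A, ∀ y ∈ A, x ⊓ y ∈ A) ∧
        (∀ x ∈ A, xᶜ ⊔ a ∈ A) :=
  isImplSublattice_iff_boolSubalgebra_Ici_general A
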